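/- Let γ > 1 and let ρ₀, p₀ : Ω → ℝ be C¹ positive functions on an open set Ω ⊆ ℝⁿ satisfying p₀ = C·ρ₀^γ for a constant C > 0 and the hydrostatic balance ∇p₀ = -ρ₀∇Φ for a C¹ potential Φ. Let q : Ω → ℝⁿ be a C¹ vector field with ∇·q = 0. Then ∇·( (γ/(γ-1))·(p₀/ρ₀)·q ) + q·∇Φ = 0. -/

import Mathlib

theorem stmt9 {n : ℕ} (Ω : Set (EuclideanSpace ℝ (Fin n))) (hΩ : IsOpen Ω)
    (γ C : ℝ) (hγ : 1 < γ) (hC : 0 < C)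
    (ρ₀ p₀ Φ : EuclideanSpace ℝ (Fin n) → ℝ)
    (q : EuclideanSpace ℝ (Fin n) → EuclideanSpace ℝ (Fin n))
    (hρC : ContDiffOn ℝ 1 ρ₀ Ω) (hpC : ContDiffOn ℝ 1 p₀ Ω)
    (hΦC : ContDiffOn ℝ 1 Φ Ω) (hqC : ContDiffOn ℝ 1 q Ω)
    (hρpos : ∀ x ∈ Ω, 0 < ρ₀ x) (hppos : ∀ x ∈ Ω, 0 < p₀ x)
    (hpoly : ∀ x ∈ Ω, p₀ x = C * ρ₀ x ^ γ)
    (hhydro : ∀ x ∈ Ω, fderiv ℝ p₀ x = -(ρ₀ x) • fderiv ℝ Φ x)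
    (hdivfree : ∀ x ∈ Ω,
      ∑ i, fderiv ℝ (fun y => q y i) x (EuclideanSpace.single i 1) = 0) :
    ∀ x ∈ Ω,
      ∑ i, fderiv ℝ (fun y => γ / (γ - 1) * (p₀ y / ρ₀ y) * q y i) x
          (EuclideanSpace.single i 1)
        + fderiv ℝ Φ x (q x) = 0 := by
  intro x hx
  have hxnhds : Ω ∈ nhds x := hΩ.mem_nhds hx
  have hρx : 0 < ρ₀ x := hρpos x hx
  have hγ1 : (0:ℝ) < γ - 1 := sub_pos.mpr hγ
  have hρd : DifferentiableAt ℝ ρ₀ x := (hρC.contDiffAt hxnhds).differentiableAt one_ne_zero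
  have hqd : DifferentiableAt ℝ q x := (hqC.contDiffAt hxnhds).differentiableAt one_ne_zero
  set Dρ := fderiv ℝ ρ₀ x with hDρ
  set f : EuclideanSpace ℝ (Fin n) → ℝ := fun y => γ / (γ - 1) * (p₀ y / ρ₀ y) with hf
  set g : EuclideanSpace ℝ (Fin n) → ℝ := fun y => (γ / (γ - 1) * C) * ρ₀ y ^ (γ - 1) with hg
  -- f = g near x
  have hfg : f =ᶠ[nhds x] g := by
    filter_upwards [hxnhds] with y hy
    have h1 : 0 < ρ₀ y := hρpos y hy
    simp only [hf, hg, hpoly y hy]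
    rw [Real.rpow_sub h1, Real.rpow_one]
    ring
  have hgder : HasFDerivAt g ((γ / (γ - 1) * C) • (((γ - 1) * ρ₀ x ^ (γ - 1 - 1)) • Dρ)) x :=
    (hρd.hasFDerivAt.rpow_const (Or.inl hρx.ne')).const_mul _
  have hfd : DifferentiableAt ℝ f x :=
    hgder.differentiableAt.congr_of_eventuallyEq hfg
  have hfder : fderiv ℝ f x = (C * γ * ρ₀ x ^ (γ - 1 - 1)) • Dρ := by
    rw [Filter.EventuallyEq.fderiv_eq hfg, hgder.fderiv, smul_smul]
    congr 1
    field_simp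
  -- compute fderiv of p₀ via polytropic relation
  have hpρ : p₀ =ᶠ[nhds x] fun y => C * ρ₀ y ^ γ := by
    filter_upwards [hxnhds] with y hy using hpoly y hy
  have hp' : fderiv ℝ p₀ x = (C * (γ * ρ₀ x ^ (γ - 1))) • Dρ := by
    rw [Filter.EventuallyEq.fderiv_eq hpρ,
      ((hρd.hasFDerivAt.rpow_const (Or.inl hρx.ne')).const_mul C).fderiv, smul_smul]
  have hkey : (C * (γ * ρ₀ x ^ (γ - 1))) • Dρ = -(ρ₀ x) • fderiv ℝ Φ x := by
    rw [← hp']; exact hhydro x hx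
  -- conclude fderiv f x = - fderiv Φ x
  have hΦder : fderiv ℝ f x = -fderiv ℝ Φ x := by
    have h2 : ((ρ₀ x)⁻¹ * (C * (γ * ρ₀ x ^ (γ - 1)))) • Dρ
        = ((ρ₀ x)⁻¹ * -(ρ₀ x)) • fderiv ℝ Φ x := by
      rw [mul_smul, hkey, mul_smul]
    rw [hfder]
    have hρ1 : ρ₀ x ^ (γ - 1 - 1) = ρ₀ x ^ (γ - 1) / ρ₀ x := by
      rw [Real.rpow_sub hρx, Real.rpow_one]
    rw [hρ1]
    have : (ρ₀ x)⁻¹ * -(ρ₀ x) = -1 := by field_simp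
    rw [this] at h2
    have h3 : C * γ * (ρ₀ x ^ (γ - 1) / ρ₀ x) = (ρ₀ x)⁻¹ * (C * (γ * ρ₀ x ^ (γ - 1))) := by
      field_simp
    rw [h3, h2, neg_one_smul]
  -- componentwise differentiability of q
  have hqid : ∀ i, DifferentiableAt ℝ (fun y => q y i) x := fun i =>
    ((EuclideanSpace.proj i : EuclideanSpace ℝ (Fin n) →L[ℝ] ℝ).differentiableAt).comp x hqd
  -- product rule on each component
  have hterm : ∀ i, fderiv ℝ (fun y => f y * q y i) x (EuclideanSpace.single i 1)
      = f x * fderiv ℝ (fun y => q y i) x (EuclideanSpace.single i 1)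
        + q x i * (fderiv ℝ f x (EuclideanSpace.single i 1)) := by
    intro i
    rw [fderiv_fun_mul hfd (hqid i)]
    simp
  have hrepr : (q x) = ∑ i, q x i • EuclideanSpace.single i (1:ℝ) := by
    ext j
    rw [WithLp.ofLp_sum, Finset.sum_apply]
    simp [EuclideanSpace.single_apply]
  have happ : fderiv ℝ f x (q x)
      = ∑ i, q x i * fderiv ℝ f x (EuclideanSpace.single i 1) := by
    conv_lhs => rw [hrepr]
    rw [map_sum]
    simp [smul_eq_mul]
  have hsum : ∑ i, fderiv ℝ (fun y => f y * q y i) x (EuclideanSpace.single i 1)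
      = fderiv ℝ f x (q x) := by
    simp only [hterm, Finset.sum_add_distrib, ← Finset.mul_sum, hdivfree x hx, mul_zero,
      zero_add, happ]
  calc ∑ i, fderiv ℝ (fun y => γ / (γ - 1) * (p₀ y / ρ₀ y) * q y i) x
          (EuclideanSpace.single i 1) + fderiv ℝ Φ x (q x)
      = fderiv ℝ f x (q x) + fderiv ℝ Φ x (q x) := by rw [← hsum]
    _ = 0 := by rw [hΦder]; simp
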